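/- Let M > 0 be real, K > 0, and (a_n)_{n≥1} complex numbers with |a_n| ≤ K^n for all n ≥ 1. Fix c > log K, so that F(t) := Σ_{n≥1} a_n e^{-nt} converges absolutely and is bounded and holomorphic on {Re t ≥ c}. Set C := (4π/M)^{1/2} e^{iπ/4}. Then for every τ in the upper half-plane ℍ, Σ_{n≥1} a_n e^{iπ n² τ/M} = (i/(π^{1/2} C)) · τ^{-1/2} · ∫_{-∞}^{+∞} e^{-(c+is)²/(C² τ)} F(c+is) ds, where τ^{-1/2} is the branch with arg(τ^{1/2}) ∈ (0, π/2). (This is the parabolic-contour Laplace representation of the partial theta series, the parabola ∂P_c = {ξ : Re(C ξ^{1/2}) = c} being parametrized by ξ = ((c+is)/C)², s ∈ ℝ.) -/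

import Mathlib

/-!
Expand `F(c + is) = Σ aₙ e^{-n(c+is)}` and integrate term by term; this is legitimate because
`|aₙ| e^{-nc} ≤ (K e^{-c})ⁿ` is summable for `c > log K`. With `b = C²τ = 4πiτ/M` we have
`Re b < 0`, so each term is a Gaussian integral along the vertical line `Re w = c`, and completing
the square gives `∫ e^{-(c+is)²/b} e^{-n(c+is)} ds = (-πb)^{1/2} e^{n²b/4} = (-πb)^{1/2} e^{iπn²τ/M}`.
It remains to identify the principal root: `(-πb)^{1/2} = -i √π C τ^{1/2}`, because `arg C = π/4`
and `0 < arg τ < π`.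
-/

open Complex MeasureTheory
open scoped Real

section GaussianLine

variable {b : ℂ}

lemma inv_re_neg_of_re_neg (hb : b.re < 0) : b⁻¹.re < 0 := by
  rw [inv_re]
  exact div_neg_of_neg_of_pos hb (normSq_pos.mpr fun h ↦ by simp [h] at hb)

lemma cexp_neg_sq_div_mul_cexp_neg_mul_eq (w ν : ℂ) (s : ℝ) :
    cexp (-(w + s * I) ^ 2 / b) * cexp (-ν * (w + s * I))
      = cexp (b⁻¹ * s ^ 2 + -(I * (2 * w / b + ν)) * s + (-(w ^ 2 / b) - ν * w)) := by
  rw [← Complex.exp_add]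
  congr 1
  linear_combination (-(s : ℂ) ^ 2 / b) * I_sq

lemma integrable_cexp_neg_sq_div_mul_cexp_neg_mul (hb : b.re < 0) (w ν : ℂ) :
    Integrable fun s : ℝ ↦ cexp (-(w + s * I) ^ 2 / b) * cexp (-ν * (w + s * I)) := by
  simpa only [cexp_neg_sq_div_mul_cexp_neg_mul_eq] using
    integrable_cexp_quadratic' (inv_re_neg_of_re_neg hb) _ _

lemma integral_cexp_neg_sq_div_mul_cexp_neg_mul (hb : b.re < 0) (w ν : ℂ) :
    ∫ s : ℝ, cexp (-(w + s * I) ^ 2 / b) * cexp (-ν * (w + s * I))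
      = (-π * b) ^ (1 / 2 : ℂ) * cexp (ν ^ 2 * b / 4) := by
  have hb₀ : b ≠ 0 := fun h ↦ by simp [h] at hb
  simp only [cexp_neg_sq_div_mul_cexp_neg_mul_eq]
  rw [integral_cexp_quadratic (inv_re_neg_of_re_neg hb)]
  congr 2
  · field_simp
  · field_simp
    linear_combination (-(2 * w + b * ν) ^ 2) * I_sq

lemma norm_cexp_neg_ofReal_mul (ν c s : ℝ) :
    ‖cexp (-(ν : ℂ) * (c + s * I))‖ = Real.exp (-ν * c) := by
  rw [norm_exp]
  congr 1
  simp

theorem integral_cexp_neg_sq_div_mul_tsum (hb : b.re < 0) (c : ℝ) (a : ℕ → ℂ) (ν : ℕ → ℝ)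
    (ha : Summable fun n ↦ ‖a n‖ * Real.exp (-ν n * c)) :
    ∫ s : ℝ, cexp (-(c + s * I) ^ 2 / b) * ∑' n, a n * cexp (-(ν n : ℂ) * (c + s * I))
      = (-π * b) ^ (1 / 2 : ℂ) * ∑' n, a n * cexp ((ν n : ℂ) ^ 2 * b / 4) := by
  set g : ℝ → ℂ := fun s ↦ cexp (-(c + s * I) ^ 2 / b)
  set f : ℕ → ℝ → ℂ := fun n s ↦ a n * (g s * cexp (-(ν n : ℂ) * (c + s * I)))
  have hf_int (n : ℕ) : Integrable (f n) :=
    (integrable_cexp_neg_sq_div_mul_cexp_neg_mul hb _ _).const_mul (a n)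
  have hf_norm (n : ℕ) : ∫ s, ‖f n s‖ = ‖a n‖ * Real.exp (-ν n * c) * ∫ s, ‖g s‖ := by
    simp only [f, norm_mul, norm_cexp_neg_ofReal_mul, ← integral_const_mul]
    congr 1 with s
    ring
  calc ∫ s, g s * ∑' n, a n * cexp (-(ν n : ℂ) * (c + s * I))
      = ∫ s, ∑' n, f n s := by
        congr 1 with s
        simp only [f, ← tsum_mul_left, mul_left_comm]
    _ = ∑' n, ∫ s, f n s :=
        (integral_tsum_of_summable_integral_norm hf_int
          (by simpa only [hf_norm] using ha.mul_right _)).symm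
    _ = _ := by
        simp only [f, integral_const_mul, g, integral_cexp_neg_sq_div_mul_cexp_neg_mul hb,
          ← tsum_mul_left, mul_left_comm]

end GaussianLine

lemma summable_norm_mul_exp_neg_mul_of_norm_le_pow {K c : ℝ} (hK : 0 < K) (hc : Real.log K < c)
    {a : ℕ → ℂ} (ha : ∀ n, ‖a n‖ ≤ K ^ (n + 1)) :
    Summable fun n : ℕ ↦ ‖a n‖ * Real.exp (-((n : ℝ) + 1) * c) := by
  have hr : K * Real.exp (-c) < 1 := by
    rw [Real.exp_neg, ← div_eq_mul_inv, div_lt_one (Real.exp_pos c)]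
    exact (Real.log_lt_iff_lt_exp hK).mp hc
  refine .of_nonneg_of_le (fun n ↦ by positivity) (fun n ↦ ?_)
    ((summable_geometric_of_lt_one (by positivity) hr).mul_left (K * Real.exp (-c)))
  calc ‖a n‖ * Real.exp (-((n : ℝ) + 1) * c) = ‖a n‖ * Real.exp (-c) ^ (n + 1) := by
        rw [← Real.exp_nat_mul]
        congr 2
        push_cast
        ring
    _ ≤ K ^ (n + 1) * Real.exp (-c) ^ (n + 1) := by gcongr; exact ha n
    _ = K * Real.exp (-c) * (K * Real.exp (-c)) ^ n := by rw [← mul_pow, pow_succ']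

lemma mul_cpow_of_arg_add_mem_Ioc {x y : ℂ} (hx : x ≠ 0) (hy : y ≠ 0)
    (h : x.arg + y.arg ∈ Set.Ioc (-π) π) (s : ℂ) : (x * y) ^ s = x ^ s * y ^ s := by
  rw [cpow_def_of_ne_zero (mul_ne_zero hx hy), log_mul hx hy h, add_mul, Complex.exp_add,
    ← cpow_def_of_ne_zero hx, ← cpow_def_of_ne_zero hy]

lemma ofReal_cpow_half {t : ℝ} (ht : 0 ≤ t) : (t : ℂ) ^ (1 / 2 : ℂ) = √t := by
  rw [Real.sqrt_eq_rpow, ofReal_cpow ht]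
  norm_num

lemma neg_I_cpow_half : (-I) ^ (1 / 2 : ℂ) = -I * cexp (I * π / 4) := by
  rw [cpow_def_of_ne_zero (neg_ne_zero.mpr I_ne_zero), log_neg_I, ← exp_neg_pi_div_two_mul_I,
    ← Complex.exp_add]
  congr 1
  ring

lemma sq_ofReal_sqrt_mul_cexp_I_mul_pi_div_four {x : ℝ} (hx : 0 ≤ x) :
    ((√x : ℂ) * cexp (I * π / 4)) ^ 2 = x * I := by
  rw [mul_pow, ← ofReal_pow, Real.sq_sqrt hx, ← Complex.exp_nat_mul]
  congr 1
  convert exp_pi_div_two_mul_I using 2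
  push_cast
  field_simp
  ring

lemma cpow_half_neg_pi_mul_sq_mul {x : ℝ} (hx : 0 < x) {τ : ℂ} (hτ : 0 < τ.im) :
    (-π * (((√x : ℂ) * cexp (I * π / 4)) ^ 2 * τ)) ^ (1 / 2 : ℂ)
      = -I * √π * ((√x : ℂ) * cexp (I * π / 4)) * τ ^ (1 / 2 : ℂ) := by
  have hτ₀ : τ ≠ 0 := fun h ↦ by simp [h] at hτ
  have hπx : 0 < π * x := by positivity
  have hsplit : -π * (((√x : ℂ) * cexp (I * π / 4)) ^ 2 * τ) = ((π * x : ℝ) : ℂ) * (-I * τ) := by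
    rw [sq_ofReal_sqrt_mul_cexp_I_mul_pi_div_four hx.le]
    push_cast
    ring
  have harg : (-I).arg + τ.arg ∈ Set.Ioc (-π) π := by
    rw [arg_neg_I]
    constructor <;> linarith [Real.pi_pos, arg_le_pi τ, arg_nonneg_iff.mpr hτ.le]
  rw [hsplit, mul_cpow_of_arg_add_mem_Ioc (by exact_mod_cast hπx.ne') (mul_ne_zero (by simp) hτ₀)
      (by rw [arg_ofReal_of_nonneg hπx.le, zero_add]; exact arg_mem_Ioc _),
    mul_cpow_of_arg_add_mem_Ioc (by simp) hτ₀ harg, ofReal_cpow_half hπx.le,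
    Real.sqrt_mul Real.pi_pos.le, neg_I_cpow_half]
  push_cast
  ring

theorem statement0 (M K : ℝ) (hM : 0 < M) (hK : 0 < K)
    (a : ℕ → ℂ) (ha : ∀ n : ℕ, 1 ≤ n → ‖a n‖ ≤ K ^ n)
    (c : ℝ) (hc : Real.log K < c)
    (C : ℂ) (hC : C = (Real.sqrt (4 * Real.pi / M) : ℂ) * Complex.exp (Complex.I * Real.pi / 4))
    (τ : ℂ) (hτ : 0 < τ.im) :
    ∑' n : ℕ, a (n + 1) * Complex.exp (Complex.I * Real.pi * ((n : ℂ) + 1) ^ 2 * τ / M)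
      = Complex.I / ((Real.sqrt Real.pi : ℂ) * C) * τ ^ (-(1 / 2) : ℂ) *
        ∫ s : ℝ, Complex.exp (-(((c : ℂ) + (s : ℂ) * Complex.I) ^ 2) / (C ^ 2 * τ)) *
          ∑' n : ℕ, a (n + 1) * Complex.exp (-((n : ℂ) + 1) * ((c : ℂ) + (s : ℂ) * Complex.I)) := by
  have hx : 0 < 4 * π / M := by positivity
  have hτ₀ : τ ≠ 0 := fun h ↦ by simp [h] at hτ
  have hC₀ : C ≠ 0 := hC ▸
    mul_ne_zero (ofReal_ne_zero.mpr (Real.sqrt_pos.mpr hx).ne') (Complex.exp_ne_zero _)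
  have hC2 : C ^ 2 = (4 * π / M : ℝ) * I := hC ▸ sq_ofReal_sqrt_mul_cexp_I_mul_pi_div_four hx.le
  have hb : (C ^ 2 * τ).re < 0 := by
    rw [hC2]
    simpa using mul_pos hx hτ
  have hF := integral_cexp_neg_sq_div_mul_tsum hb c (fun n ↦ a (n + 1)) (fun n ↦ (n : ℝ) + 1)
    (summable_norm_mul_exp_neg_mul_of_norm_le_pow hK hc fun n ↦ ha (n + 1) n.succ_pos)
  push_cast at hF
  rw [hF, hC, cpow_half_neg_pi_mul_sq_mul hx hτ, ← hC, ← mul_assoc]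
  have hunit : I / (√π * C) * τ ^ (-(1 / 2) : ℂ) * (-I * √π * C * τ ^ (1 / 2 : ℂ)) = 1 := by
    have hτ' : τ ^ (1 / 2 : ℂ) ≠ 0 := by simp [hτ₀]
    rw [cpow_neg]
    field_simp
    simp
  rw [hunit, one_mul]
  congr 1 with n
  rw [hC2]
  push_cast
  field_simp
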